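/- Let α be a complex number algebraic over ℚ and let β be a conjugate of α (a complex root of the minimal polynomial of α over ℚ). If k_1,…,k_n ∈ ℤ are such that (k_1α,…,k_nα) is a λ-quiddity over ⟨α⟩, then (k_1β,…,k_nβ) is a λ-quiddity over ⟨β⟩; more precisely, M_n(k_1α,…,k_nα) = εId with ε = ±1 implies M_n(k_1β,…,k_nβ) = εId. -/
import Mathlib


open Matrix Polynomial

noncomputable section

/-- The elementary matrix [[a, -1], [1, 0]]. -/
def matE (a : ℂ) : Matrix (Fin 2) (Fin 2) ℂ := !![a, -1; 1, 0]

/-- M_n(a_1, …, a_n) = matE a_n * matE a_{n-1} * ⋯ * matE a_1, for the list [a_1, …, a_n]. -/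
def Mlist (l : List ℂ) : Matrix (Fin 2) (Fin 2) ℂ := (l.reverse.map matE).prod

/-- A λ-quiddity over R : a nonempty tuple of elements of R with M_n(a_1,…,a_n) = ±Id. -/
def IsQuiddity (R : Set ℂ) (l : List ℂ) : Prop :=
  l ≠ [] ∧ (∀ x ∈ l, x ∈ R) ∧ (Mlist l = 1 ∨ Mlist l = -1)

/-- (a_1,…,a_n) ⊕ (b_1,…,b_m) := (a_1+b_m, a_2,…,a_{n-1}, a_n+b_1, b_2,…,b_{m-1}). -/
def oplus (a b : List ℂ) : List ℂ :=
  (a.headI + b.getLastD 0) ::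
    (a.tail.dropLast ++ (a.getLastD 0 + b.headI) :: b.tail.dropLast)

/-- b is obtained from a by a cyclic permutation of a or of the reversal of a. -/
def CyclicEquiv (a b : List ℂ) : Prop :=
  (∃ k, b = a.rotate k) ∨ (∃ k, b = a.reverse.rotate k)

/-- A λ-quiddity c over R is reducible if c ∼ (a_1,…,a_m) ⊕ (b_1,…,b_l) with
(a_1,…,a_m) a tuple of elements of R, (b_1,…,b_l) a λ-quiddity over R, m ≥ 3 and l ≥ 3. -/
def ReducibleQuiddity (R : Set ℂ) (c : List ℂ) : Prop :=
  ∃ a b : List ℂ, (∀ x ∈ a, x ∈ R) ∧ IsQuiddity R b ∧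
    3 ≤ a.length ∧ 3 ≤ b.length ∧ CyclicEquiv c (oplus a b)

/-- The irreducible λ-quiddities over R : the λ-quiddities of size ≥ 3 which are not
reducible (those of size < 3, i.e. (0,0), are by convention not irreducible). -/
def IrreducibleQuiddity (R : Set ℂ) (c : List ℂ) : Prop :=
  IsQuiddity R c ∧ 3 ≤ c.length ∧ ¬ ReducibleQuiddity R c

/-- The subgroup ⟨w⟩ = {kw : k ∈ ℤ} of (ℂ, +), as a set. -/
def subgroupGen (w : ℂ) : Set ℂ := {x | ∃ k : ℤ, x = (k : ℂ) * w}

end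

section
noncomputable section
def matE' {R : Type*} [CommRing R] (a : R) : Matrix (Fin 2) (Fin 2) R := !![a, -1; 1, 0]
def Mlist' {R : Type*} [CommRing R] (l : List R) : Matrix (Fin 2) (Fin 2) R :=
  (l.reverse.map matE').prod

lemma map_matE' {R S : Type*} [CommRing R] [CommRing S] (f : R →+* S) (a : R) :
    f.mapMatrix (matE' a) = matE' (f a) := by
  ext i j; fin_cases i <;> fin_cases j <;>
    simp [matE', RingHom.mapMatrix_apply, Matrix.map_apply]

lemma map_Mlist' {R S : Type*} [CommRing R] [CommRing S] (f : R →+* S) (l : List R) :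
    f.mapMatrix (Mlist' l) = Mlist' (l.map f) := by
  unfold Mlist'
  rw [map_list_prod, ← List.map_reverse, List.map_map, List.map_map]
  congr 1
  simp only [Function.comp_def]
  exact List.map_congr_left (fun a _ => map_matE' f a)

lemma listcast (ks : List ℤ) (x : ℂ) :
    (ks.map fun k => (k : ℂ) * x) = List.map (fun k : ℤ => (k : ℂ) * x) ks := by
  induction ks with
  | nil => rfl
  | cons a t ih => simpa using ih
end
end

theorem stmt6 (α : ℂ) (hα : IsAlgebraic ℚ α) (β : ℂ)
    (hβ : Polynomial.aeval β (minpoly ℚ α) = 0)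
    (ks : List ℤ) (hne : ks ≠ []) (ε : ℂ) (hε : ε = 1 ∨ ε = -1)
    (h : Mlist (ks.map fun k => (k : ℂ) * α) = ε • (1 : Matrix (Fin 2) (Fin 2) ℂ)) :
    Mlist (ks.map fun k => (k : ℂ) * β) = ε • (1 : Matrix (Fin 2) (Fin 2) ℂ) := by
  rw [listcast] at h ⊢
  have hint : IsIntegral ℚ α := hα.isIntegral
  set K := IntermediateField.adjoin ℚ {α} with hK
  let gen : K := IntermediateField.AdjoinSimple.gen ℚ α
  let pb : PowerBasis ℚ K := IntermediateField.adjoin.powerBasis hint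
  have hpbgen : pb.gen = gen := IntermediateField.adjoin.powerBasis_gen hint
  have hmin : minpoly ℚ pb.gen = minpoly ℚ α := by
    rw [hpbgen]
    exact IntermediateField.minpoly_eq (IntermediateField.AdjoinSimple.gen ℚ α) ▸ rfl
  have hroot : Polynomial.aeval β (minpoly ℚ pb.gen) = 0 := by rw [hmin]; exact hβ
  let φ : K →+* ℂ := (pb.lift β hroot : K →ₐ[ℚ] ℂ)
  have hφgen : φ gen = β := hpbgen ▸ pb.lift_gen (y := β) hroot
  let ι : K →+* ℂ := (K.val : K →ₐ[ℚ] ℂ)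
  have hιgen : ι gen = α := rfl
  have hιinj : Function.Injective ι := Subtype.val_injective
  let lK : List K := ks.map (fun k : ℤ => (k : K) * gen)
  have hmapι : lK.map ι = ks.map fun k : ℤ => (k : ℂ) * α := by
    rw [List.map_map]
    refine List.map_congr_left (fun k _ => ?_)
    simp only [Function.comp_apply, _root_.map_mul, _root_.map_intCast, hιgen]
  have hmapφ : lK.map φ = ks.map fun k : ℤ => (k : ℂ) * β := by
    rw [List.map_map]
    refine List.map_congr_left (fun k _ => ?_)
    simp only [Function.comp_apply, _root_.map_mul, _root_.map_intCast, hφgen]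
  have hMl : ∀ l : List ℂ, Mlist l = Mlist' l := fun l => rfl
  set E : Matrix (Fin 2) (Fin 2) K := if ε = 1 then 1 else -1 with hE
  have hmapE : ∀ f : K →+* ℂ, f.mapMatrix E = ε • (1 : Matrix (Fin 2) (Fin 2) ℂ) := by
    intro f
    rcases hε with h1 | h1 <;> subst h1
    · simp [hE]
    · rw [hE, if_neg (by norm_num), _root_.map_neg, _root_.map_one, neg_smul, one_smul]
  have hι : ι.mapMatrix (Mlist' lK) = ι.mapMatrix E := by
    rw [map_Mlist', hmapι, ← hMl, h, hmapE]
  have key : Mlist' lK = E := by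
    ext i j
    have h2 := congrFun (congrFun (congrArg (fun M : Matrix (Fin 2) (Fin 2) ℂ => M) hι) i) j
    simp only [RingHom.mapMatrix_apply, Matrix.map_apply] at h2
    exact h2
  rw [hMl, ← hmapφ, ← map_Mlist' φ lK, key, hmapE]
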